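/- Let G = (V,E) be a simple graph on a finite vertex set V with |V| = n, and let c be a constant such that for every vertex v ∈ V, the number of vertices at graph distance at most 2 from v in G is at most c. Fix 0 ≤ p < 1 and form a random supergraph G' of G by adding, independently for each unordered pair of distinct vertices, an edge with probability p (pairs already joined in G remain joined). Let N be the number of unordered pairs {i,j} of distinct vertices such that i and j are NOT adjacent in G, but i and j ARE adjacent in G' and moreover have a common neighbor in G' (i.e., there exists z with i ~ z and z ~ j in G'). Then the expectation of N satisfies E[N] ≤ c n p + c n² p² + (1/2) n³ p³. -/

import Mathlib

/-!
A pair `{i, j}` counted by `N` has `ij` added and a common neighbour `z` in `G'`. According to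
which of `iz`, `zj` are edges of `G`, it is witnessed by an ordered pair `(i, j)` with a common
`G`-neighbour and one added edge, by a triple `(i, j, z)` with `zj ∈ G` and the two added edges
`ij`, `iz`, or by a triangle `ijz` of added edges, which is witnessed twice, as `(i, j, z)` and as
`(j, i, z)`. A configuration needing `k` distinct added edges occurs with probability `p ^ k`. The
bound `c` on balls of radius 2 leaves at most `c n` pairs of the first kind and `c n²` triples of
the second, and there are at most `n³` triangles.
-/

open Finset SimpleGraph

lemma Finset.two_mul_card_image_le {α β : Type*} [DecidableEq β] (S : Finset α) (f : α → β)
    (σ : α → α) (hσS : ∀ t ∈ S, σ t ∈ S) (hσ : ∀ t ∈ S, σ t ≠ t) (hfσ : ∀ t, f (σ t) = f t) :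
    2 * #(S.image f) ≤ #S := by
  rw [card_eq_sum_card_image f S, mul_comm, ← smul_eq_mul, ← sum_const]
  refine sum_le_sum fun q hq => ?_
  obtain ⟨t, htS, rfl⟩ := mem_image.mp hq
  exact one_lt_card.mpr ⟨σ t, mem_filter.mpr ⟨hσS t htS, hfσ t⟩, t, mem_filter.mpr ⟨htS, rfl⟩,
    hσ t htS⟩

section Bernoulli

variable {ι : Type*} [Fintype ι]

def bernoulliWeight (p : ℝ) (ω : ι → Bool) : ℝ :=
  ∏ i, if ω i then p else 1 - p

lemma bernoulliWeight_nonneg {p : ℝ} (hp0 : 0 ≤ p) (hp1 : p ≤ 1) (ω : ι → Bool) :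
    0 ≤ bernoulliWeight p ω :=
  prod_nonneg fun i _ => by split <;> linarith

lemma sum_bernoulliWeight_mul_indicator [DecidableEq ι] (p : ℝ) (T : Finset ι) :
    ∑ ω : ι → Bool, bernoulliWeight p ω * (if ∀ i ∈ T, ω i then 1 else 0) = p ^ #T := by
  set f : ι → Bool → ℝ := fun i b => if b then p else if i ∈ T then 0 else 1 - p
  have hfactor : ∀ ω : ι → Bool,
      bernoulliWeight p ω * (if ∀ i ∈ T, ω i then 1 else 0) = ∏ i, f i (ω i) := by
    intro ω
    by_cases hω : ∀ i ∈ T, ω i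
    · rw [if_pos hω, mul_one]
      refine prod_congr rfl fun i _ => ?_
      by_cases hi : i ∈ T <;> simp [f, hi, hω]
    · rw [if_neg hω, mul_zero]
      push Not at hω
      obtain ⟨i, hi, hωi⟩ := hω
      exact (prod_eq_zero (mem_univ i) (by simp [f, hi, hωi])).symm
  have hmarginal : ∀ i, ∑ b, f i b = if i ∈ T then p else 1 := by
    intro i
    by_cases hi : i ∈ T <;> simp [f, hi]
  simp_rw [hfactor, ← Fintype.prod_sum, hmarginal, prod_ite_mem, univ_inter, prod_const]

end Bernoulli

section Perturbation

variable {V : Type*}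

def addedEdges (ω : {e : Sym2 V // ¬ e.IsDiag} → Bool) : Set (Sym2 V) :=
  {e | ∃ h : ¬ e.IsDiag, ω ⟨e, h⟩ = true}

open Classical in
noncomputable def realized {α : Type*} (E : Set (Sym2 V)) (S : Finset α)
    (T : α → Finset (Sym2 V)) : Finset α :=
  {t ∈ S | ∀ e ∈ T t, e ∈ E}

lemma mem_realized {α : Type*} {E : Set (Sym2 V)} {S : Finset α} {T : α → Finset (Sym2 V)}
    {t : α} : t ∈ realized E S T ↔ t ∈ S ∧ ∀ e ∈ T t, e ∈ E := by
  classical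
  simp only [realized, mem_filter]

lemma forall_mem_addedEdges_iff [DecidableEq V] {T : Finset (Sym2 V)}
    (hT : ∀ e ∈ T, ¬ e.IsDiag) (ω : {e : Sym2 V // ¬ e.IsDiag} → Bool) :
    (∀ e ∈ T, e ∈ addedEdges ω) ↔ ∀ e ∈ T.subtype (fun e : Sym2 V => ¬ e.IsDiag), ω e := by
  simp only [addedEdges, Set.mem_ofPred_eq, mem_subtype, Subtype.forall]
  exact ⟨fun h e he heT => (h e heT).elim fun _ h' => h', fun h e heT => ⟨hT e heT, h e _ heT⟩⟩

lemma sum_bernoulliWeight_mul_card_realized [Fintype V] [DecidableEq V] {α : Type*} (p : ℝ)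
    (S : Finset α) (T : α → Finset (Sym2 V)) (k : ℕ) (hT : ∀ t ∈ S, ∀ e ∈ T t, ¬ e.IsDiag)
    (hk : ∀ t ∈ S, #(T t) = k) :
    ∑ ω, bernoulliWeight p ω * #(realized (addedEdges ω) S T) = #S * p ^ k := by
  classical
  simp only [realized, natCast_card_filter, mul_sum]
  rw [sum_comm, ← nsmul_eq_mul, ← sum_const]
  refine sum_congr rfl fun t ht => ?_
  have hcard : #((T t).subtype (fun e : Sym2 V => ¬ e.IsDiag)) = k := by
    rw [card_subtype, filter_true_of_mem (hT t ht), hk t ht]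
  simp_rw [← hcard, ← sum_bernoulliWeight_mul_indicator, forall_mem_addedEdges_iff (hT t ht)]

end Perturbation

section Configurations

variable {V : Type*}

open Classical in
noncomputable def commonNeighborPairs [Fintype V] (G : SimpleGraph V) : Finset (V × V) :=
  {x | x.1 ≠ x.2 ∧ ∃ z, G.Adj x.1 z ∧ G.Adj z x.2}

open Classical in
noncomputable def wedgeTriples [Fintype V] (G : SimpleGraph V) : Finset (V × V × V) :=
  {t | t.1 ≠ t.2.1 ∧ t.1 ≠ t.2.2 ∧ G.Adj t.2.2 t.2.1}

def distinctTriples (V : Type*) [Fintype V] [DecidableEq V] : Finset (V × V × V) :=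
  {t | t.1 ≠ t.2.1 ∧ t.1 ≠ t.2.2 ∧ t.2.1 ≠ t.2.2}

def pairEdge (x : V × V) : Finset (Sym2 V) := {s(x.1, x.2)}

def wedgeEdges [DecidableEq V] (t : V × V × V) : Finset (Sym2 V) :=
  {s(t.1, t.2.1), s(t.1, t.2.2)}

def triangleEdges [DecidableEq V] (t : V × V × V) : Finset (Sym2 V) :=
  {s(t.1, t.2.1), s(t.1, t.2.2), s(t.2.1, t.2.2)}

def firstPair (t : V × V × V) : Sym2 V := s(t.1, t.2.1)

def shortcutPairs (G H : SimpleGraph V) : Set (Sym2 V) :=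
  {q | ∃ i j, q = s(i, j) ∧ i ≠ j ∧ ¬ G.Adj i j ∧ H.Adj i j ∧ ∃ z, H.Adj i z ∧ H.Adj z j}

variable [Fintype V] [DecidableEq V]

lemma shortcutPairs_subset (G : SimpleGraph V) (E : Set (Sym2 V)) :
    shortcutPairs G (G ⊔ fromEdgeSet E) ⊆
      ↑(image (fun x : V × V => s(x.1, x.2)) (realized E (commonNeighborPairs G) pairEdge) ∪
        image firstPair (realized E (wedgeTriples G) wedgeEdges) ∪
        image firstPair (realized E (distinctTriples V) triangleEdges)) := by
  rintro q ⟨i, j, rfl, hij, hnadj, hadj, z, hiz, hzj⟩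
  simp only [sup_adj, fromEdgeSet_adj] at hadj hiz hzj
  have hE_ij : s(i, j) ∈ E := (hadj.resolve_left hnadj).1
  simp only [mem_coe, mem_union, mem_image, mem_realized, commonNeighborPairs, wedgeTriples,
    distinctTriples, mem_filter, mem_univ, true_and, pairEdge, wedgeEdges, triangleEdges,
    firstPair, mem_insert, mem_singleton, forall_eq_or_imp, forall_eq, Prod.exists]
  rcases hiz with giz | ⟨eiz, hiz⟩ <;> rcases hzj with gzj | ⟨ezj, hzj⟩
  · exact .inl (.inl ⟨i, j, ⟨⟨hij, z, giz, gzj⟩, hE_ij⟩, rfl⟩)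
  · refine .inl (.inr ⟨j, i, z, ⟨⟨hij.symm, hzj.symm, giz.symm⟩, ?_, ?_⟩, Sym2.eq_swap⟩) <;>
      rwa [Sym2.eq_swap]
  · exact .inl (.inr ⟨i, j, z, ⟨⟨hij, hiz, gzj⟩, hE_ij, eiz⟩, rfl⟩)
  · exact .inr ⟨i, j, z, ⟨⟨hij, hiz, hzj.symm⟩, hE_ij, eiz, by rwa [Sym2.eq_swap]⟩, rfl⟩

lemma natCard_shortcutPairs_le (G : SimpleGraph V) (E : Set (Sym2 V)) :
    (Nat.card (shortcutPairs G (G ⊔ fromEdgeSet E)) : ℝ) ≤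
      #(realized E (commonNeighborPairs G) pairEdge) +
        #(realized E (wedgeTriples G) wedgeEdges) +
          #(realized E (distinctTriples V) triangleEdges) / 2 := by
  set A := realized E (commonNeighborPairs G) pairEdge
  set B := realized E (wedgeTriples G) wedgeEdges
  set C := realized E (distinctTriples V) triangleEdges
  have hcover : Nat.card (shortcutPairs G (G ⊔ fromEdgeSet E)) ≤
      #A + #B + #(C.image firstPair) :=
    calc Nat.card (shortcutPairs G (G ⊔ fromEdgeSet E))
        ≤ #(A.image (fun x : V × V => s(x.1, x.2)) ∪ B.image firstPair ∪ C.image firstPair) := by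
          rw [Nat.card_coe_set_eq, ← Set.ncard_coe_finset]
          exact Set.ncard_le_ncard (shortcutPairs_subset G E)
      _ ≤ #(A.image (fun x : V × V => s(x.1, x.2))) + #(B.image firstPair) +
            #(C.image firstPair) :=
          (card_union_le _ _).trans (add_le_add_left (card_union_le _ _) _)
      _ ≤ #A + #B + #(C.image firstPair) := by gcongr <;> exact card_image_le
  have hC : 2 * #(C.image firstPair) ≤ #C := by
    refine two_mul_card_image_le _ firstPair (fun t => (t.2.1, t.1, t.2.2)) (fun t ht => ?_)
      (fun t ht h => ?_) fun t => Sym2.eq_swap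
    · simp only [C, mem_realized, distinctTriples, mem_filter, mem_univ, true_and, triangleEdges,
        mem_insert, mem_singleton, forall_eq_or_imp, forall_eq] at ht ⊢
      obtain ⟨⟨hij, hiz, hjz⟩, eij, eiz, ejz⟩ := ht
      exact ⟨⟨hij.symm, hjz, hiz⟩, by rwa [Sym2.eq_swap], ejz, eiz⟩
    · simp only [C, mem_realized, distinctTriples, mem_filter, mem_univ, true_and] at ht
      exact ht.1.1 (congrArg Prod.fst h).symm
  have hcover' : (Nat.card (shortcutPairs G (G ⊔ fromEdgeSet E)) : ℝ) ≤
      #A + #B + #(C.image firstPair) := by exact_mod_cast hcover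
  have hC' : (2 : ℝ) * #(C.image firstPair) ≤ #C := by exact_mod_cast hC
  linarith

lemma sum_bernoulliWeight_mul_card_realized_commonNeighborPairs (G : SimpleGraph V) (p : ℝ) :
    ∑ ω, bernoulliWeight p ω * #(realized (addedEdges ω) (commonNeighborPairs G) pairEdge) =
      #(commonNeighborPairs G) * p := by
  rw [sum_bernoulliWeight_mul_card_realized p _ _ 1, pow_one]
  · rintro ⟨i, j⟩ h
    simp_all [commonNeighborPairs, pairEdge]
  · intro x _
    exact card_singleton _

lemma sum_bernoulliWeight_mul_card_realized_wedgeTriples (G : SimpleGraph V) (p : ℝ) :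
    ∑ ω, bernoulliWeight p ω * #(realized (addedEdges ω) (wedgeTriples G) wedgeEdges) =
      #(wedgeTriples G) * p ^ 2 := by
  rw [sum_bernoulliWeight_mul_card_realized p _ _ 2]
  · rintro ⟨i, j, z⟩ h
    simp_all [wedgeTriples, wedgeEdges]
  · rintro ⟨i, j, z⟩ h
    simp only [wedgeTriples, mem_filter, mem_univ, true_and] at h
    exact card_pair (by simp [h.2.1, h.2.2.ne.symm])

lemma sum_bernoulliWeight_mul_card_realized_distinctTriples (p : ℝ) :
    ∑ ω, bernoulliWeight p ω * #(realized (addedEdges ω) (distinctTriples V) triangleEdges) =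
      #(distinctTriples V) * p ^ 3 := by
  rw [sum_bernoulliWeight_mul_card_realized p _ _ 3]
  · rintro ⟨i, j, z⟩ h
    simp_all [distinctTriples, triangleEdges]
  · rintro ⟨i, j, z⟩ h
    simp only [distinctTriples, mem_filter, mem_univ, true_and] at h
    obtain ⟨hij, hiz, hjz⟩ := h
    rw [triangleEdges, card_insert_of_notMem (by simp [hij, hiz, hjz]),
      card_pair (by simp [hij, hiz])]

end Configurations

section Counting

variable {V : Type*} [Fintype V] [DecidableEq V]

lemma card_le_of_forall_walk_length_le_two (G : SimpleGraph V) {c : ℝ}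
    (hc : ∀ v : V, (Nat.card {u : V | ∃ w : G.Walk v u, w.length ≤ 2} : ℝ) ≤ c)
    (Q : Finset (V × V)) (hQ : ∀ x ∈ Q, ∃ w : G.Walk x.1 x.2, w.length ≤ 2) :
    (#Q : ℝ) ≤ c * Fintype.card V := by
  have hfiber : ∀ v, (#{x ∈ Q | x.1 = v} : ℝ) ≤ c := by
    intro v
    refine le_trans ?_ (hc v)
    rw [Nat.card_coe_set_eq, ← Set.ncard_coe_finset]
    refine Nat.cast_le.mpr (Set.ncard_le_ncard_of_injOn Prod.snd ?_ ?_ (Set.toFinite _))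
    · rintro x hx
      obtain ⟨hxQ, rfl⟩ := mem_filter.mp hx
      exact hQ x hxQ
    · rintro x hx y hy hxy
      exact Prod.ext ((mem_filter.mp hx).2.trans (mem_filter.mp hy).2.symm) hxy
  calc (#Q : ℝ) = ∑ v, (#{x ∈ Q | x.1 = v} : ℝ) := by
        rw [card_eq_sum_card_fiberwise (fun x _ => mem_univ x.1), Nat.cast_sum]
    _ ≤ ∑ _v : V, c := sum_le_sum fun v _ => hfiber v
    _ = c * Fintype.card V := by rw [sum_const, card_univ, nsmul_eq_mul, mul_comm]

lemma card_commonNeighborPairs_le (G : SimpleGraph V) {c : ℝ}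
    (hc : ∀ v : V, (Nat.card {u : V | ∃ w : G.Walk v u, w.length ≤ 2} : ℝ) ≤ c) :
    (#(commonNeighborPairs G) : ℝ) ≤ c * Fintype.card V := by
  refine card_le_of_forall_walk_length_le_two G hc _ fun x hx => ?_
  obtain ⟨-, z, hxz, hzx⟩ := by simpa [commonNeighborPairs] using hx
  exact ⟨.cons hxz (.cons hzx .nil), le_rfl⟩

lemma card_wedgeTriples_le (G : SimpleGraph V) {c : ℝ}
    (hc : ∀ v : V, (Nat.card {u : V | ∃ w : G.Walk v u, w.length ≤ 2} : ℝ) ≤ c) :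
    (#(wedgeTriples G) : ℝ) ≤ c * Fintype.card V ^ 2 := by
  classical
  have hsub : wedgeTriples G ⊆ (univ : Finset V) ×ˢ ({x | G.Adj x.2 x.1} : Finset (V × V)) :=
    fun t ht => by
      simp only [wedgeTriples, mem_filter, mem_univ, true_and] at ht
      simp [ht.2.2]
  have hadj : (#{x : V × V | G.Adj x.2 x.1} : ℝ) ≤ c * Fintype.card V :=
    card_le_of_forall_walk_length_le_two G hc _ fun x hx =>
      ⟨.cons (mem_filter.mp hx).2.symm .nil, by simp⟩
  calc (#(wedgeTriples G) : ℝ) ≤ Fintype.card V * #{x : V × V | G.Adj x.2 x.1} := by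
        exact_mod_cast (card_le_card hsub).trans_eq (by rw [card_product, card_univ])
    _ ≤ Fintype.card V * (c * Fintype.card V) := by gcongr
    _ = c * Fintype.card V ^ 2 := by ring

lemma card_distinctTriples_le : (#(distinctTriples V) : ℝ) ≤ Fintype.card V ^ 3 := by
  exact_mod_cast (card_le_univ _).trans_eq (by simp [Fintype.card_prod]; ring)

end Counting

/-- Error-detection theorem. `G` is a simple graph on `n` vertices in which each
vertex has at most `c` vertices within graph distance 2 (walks of length ≤ 2).
Each unordered pair of distinct vertices is added independently with probability
`p ∈ [0,1)`, giving the random supergraph `G' ω = G ⊔ fromEdgeSet {added edges}`.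
`N ω` counts unordered pairs `{i,j}` of distinct vertices not adjacent in `G` that
are adjacent in `G' ω` and have a common neighbor in `G' ω`. Then
`E[N] ≤ c n p + c n² p² + ½ n³ p³`. The probability space is the product Bernoulli
space of the edge indicators `ω : {e : Sym2 V // ¬ e.IsDiag} → Bool`. -/
theorem stmt_0 {V : Type*} [Fintype V] [DecidableEq V]
    (G : SimpleGraph V) (n : ℕ) (hn : Fintype.card V = n)
    (c : ℝ)
    (hc : ∀ v : V, (Nat.card {u : V | ∃ w : G.Walk v u, w.length ≤ 2} : ℝ) ≤ c)
    (p : ℝ) (hp0 : 0 ≤ p) (hp1 : p < 1) :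
    (∑ ω : {e : Sym2 V // ¬ e.IsDiag} → Bool,
        (∏ e : {e : Sym2 V // ¬ e.IsDiag}, if ω e then p else 1 - p) *
          (Nat.card {q : Sym2 V // ∃ i j : V, q = s(i, j) ∧ i ≠ j ∧ ¬ G.Adj i j ∧
            (G ⊔ SimpleGraph.fromEdgeSet
                {e : Sym2 V | ∃ h : ¬ e.IsDiag, ω ⟨e, h⟩ = true}).Adj i j ∧
            ∃ z : V,
              (G ⊔ SimpleGraph.fromEdgeSet
                  {e : Sym2 V | ∃ h : ¬ e.IsDiag, ω ⟨e, h⟩ = true}).Adj i z ∧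
              (G ⊔ SimpleGraph.fromEdgeSet
                  {e : Sym2 V | ∃ h : ¬ e.IsDiag, ω ⟨e, h⟩ = true}).Adj z j} : ℝ))
      ≤ c * n * p + c * n ^ 2 * p ^ 2 + (1 / 2) * n ^ 3 * p ^ 3 := by
  subst hn
  calc _ ≤ ∑ ω, bernoulliWeight p ω *
          (#(realized (addedEdges ω) (commonNeighborPairs G) pairEdge) +
            #(realized (addedEdges ω) (wedgeTriples G) wedgeEdges) +
              #(realized (addedEdges ω) (distinctTriples V) triangleEdges) / 2 : ℝ) :=
        sum_le_sum fun ω _ => mul_le_mul_of_nonneg_left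
          (natCard_shortcutPairs_le G (addedEdges ω)) (bernoulliWeight_nonneg hp0 hp1.le ω)
    _ = #(commonNeighborPairs G) * p + #(wedgeTriples G) * p ^ 2 +
          #(distinctTriples V) * p ^ 3 / 2 := by
        simp only [mul_add, mul_div_assoc', sum_add_distrib, ← sum_div,
          sum_bernoulliWeight_mul_card_realized_commonNeighborPairs,
          sum_bernoulliWeight_mul_card_realized_wedgeTriples,
          sum_bernoulliWeight_mul_card_realized_distinctTriples]
    _ ≤ c * Fintype.card V * p + c * Fintype.card V ^ 2 * p ^ 2 +
          (1 / 2) * Fintype.card V ^ 3 * p ^ 3 := by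
        have hA := mul_le_mul_of_nonneg_right (card_commonNeighborPairs_le G hc) hp0
        have hB := mul_le_mul_of_nonneg_right (card_wedgeTriples_le G hc) (pow_nonneg hp0 2)
        have hC := mul_le_mul_of_nonneg_right (card_distinctTriples_le (V := V))
          (pow_nonneg hp0 3)
        linarith
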